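/- Fix a > 0. Let (w_n) be a sequence of functions in B_a that converges to some w ∈ B*_a with respect to the uniform topology as n → ∞. Then ρ(w_n) → ρ(w) as n → ∞. Furthermore, the map T^me_a is continuous at every w ∈ B*_a with respect to the uniform topology, i.e., T^me_a(w_n) → T^me_a(w) uniformly on [0,a]. -/

import Mathlib

/-!
Off any neighbourhood of the unique maximiser `ρ(w)`, the continuous bridge `w` stays a positive
gap below its maximum on `[0,a]`; a uniformly close `w_n` cannot close that gap, so its first
maximiser `ρ(w_n)` lies in the neighbourhood.

When `w(a) = 0`, `T^me_a(w)(t) = w(min(t, ρ)) + w(a + ρ - max(t, ρ))` with `ρ = ρ(w)`. Read as a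
function of `(ρ, t)` this is continuous on `[0,a]²`, hence uniformly continuous, so
`T^me_a(w_n)` is within `2‖w_n - w‖ + ω(|ρ(w_n) - ρ(w)|)` of `T^me_a(w)`, where `ω` is that
modulus of continuity.
-/

open Set Filter MeasureTheory Topology UniformConvergence

noncomputable section

/-- Supremum of `f` over the interval `[s,t]`. -/
def fileMaxOn (f : ℝ → ℝ) (s t : ℝ) : ℝ := sSup (f '' Set.Icc s t)

/-- Infimum of `f` over the interval `[s,t]`. -/
def fileMinOn (f : ℝ → ℝ) (s t : ℝ) : ℝ := sInf (f '' Set.Icc s t)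

/-- `ρ(w)`: the first time in `[0,a]` at which `f` attains its maximum over `[0,a]`. -/
def rho (a : ℝ) (f : ℝ → ℝ) : ℝ := sInf {s | s ∈ Set.Icc 0 a ∧ f s = fileMaxOn f 0 a}

/-- membership in `B_a`: continuous bridges of length `a`. -/
def IsBridge (a : ℝ) (f : ℝ → ℝ) : Prop :=
  ContinuousOn f (Set.Icc 0 a) ∧ f 0 = 0 ∧ f a = 0

/-- membership in `B*_a`: bridges whose maximum is attained at a unique point. -/
def IsBridgeStar (a : ℝ) (f : ℝ → ℝ) : Prop :=
  IsBridge a f ∧ ∃! s, s ∈ Set.Icc 0 a ∧ ∀ u ∈ Set.Icc 0 a, f u ≤ f s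

/-- membership in `M_a`. -/
def IsMeander (a : ℝ) (f : ℝ → ℝ) : Prop :=
  ContinuousOn f (Set.Icc 0 a) ∧ f 0 = 0 ∧ ∀ s ∈ Set.Icc 0 a, f s ≤ f a

/-- membership in `M*_a`. -/
def IsMeanderStar (a : ℝ) (f : ℝ → ℝ) : Prop :=
  ContinuousOn f (Set.Icc 0 a) ∧ f 0 = 0 ∧ rho a f = a

/-- The transformation `T^me_a`. -/
def Tme (a : ℝ) (f : ℝ → ℝ) : ℝ → ℝ := fun t =>
  if t ≤ rho a f then f t else f (rho a f) + f (a + rho a f - t)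

/-- `γ_{f(a)/2}`: the first time in `[0,a]` at which `f` hits the level `f(a)/2`. -/
def gammaHalf (a : ℝ) (f : ℝ → ℝ) : ℝ := sInf {s | s ∈ Set.Icc 0 a ∧ f s = f a / 2}

/-- The transformation `T^br_a`. -/
def Tbr (a : ℝ) (f : ℝ → ℝ) : ℝ → ℝ := fun t =>
  if t ≤ gammaHalf a f then f t else f (a + gammaHalf a f - t) - f (gammaHalf a f)

/-- The Brownian scaling map `S_b`. -/
def scaleMap (b : ℝ) (f : ℝ → ℝ) : ℝ → ℝ := fun t => (Real.sqrt b)⁻¹ * f (b * t)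

/-- `m^br_t(w)` (for bridges of length `1`). -/
def mbr (f : ℝ → ℝ) (t : ℝ) : ℝ := if t ≤ rho 1 f then fileMaxOn f 0 t else fileMaxOn f t 1

/-- `g^br_t(w)`: left endpoint of the excursion of `m^br(w) - w` straddling `t`. -/
def gbr (f : ℝ → ℝ) (t : ℝ) : ℝ := sSup {s | s ∈ Set.Icc 0 t ∧ mbr f s - f s = 0}

/-- `d^br_t(w)`: right endpoint of the excursion of `m^br(w) - w` straddling `t`,
with the convention `d^br_1(w) = 1`. -/
def dbr (f : ℝ → ℝ) (t : ℝ) : ℝ :=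
  if t = 1 then 1 else sInf {s | s ∈ Set.Ioc t 1 ∧ mbr f s - f s = 0}

/-- `r^br_t(w)`: maximum of `m^br(w) - w` over the excursion interval. -/
def rbr (f : ℝ → ℝ) (t : ℝ) : ℝ :=
  sSup ((fun s => mbr f s - f s) '' Set.Icc (gbr f t) (dbr f t))

/-- `u^br_t(w)`: Lebesgue time spent, up to time `t`, in non-excised excursions. -/
def ubr (f : ℝ → ℝ) (t : ℝ) : ℝ := ∫ s in (0:ℝ)..t, if rbr f s < mbr f s then (1:ℝ) else 0

/-- `α^br_s(w)`, with the convention `α^br_{u^br_1(w)}(w) = 1`. -/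
def abr (f : ℝ → ℝ) (s : ℝ) : ℝ :=
  if s = ubr f 1 then 1 else sInf {t | t ∈ Set.Icc (0:ℝ) 1 ∧ s < ubr f t}

/-- `H^br(w)` (as a function; it is relevant on `[0, u^br_1(w)]`). -/
def Hbr (f : ℝ → ℝ) : ℝ → ℝ := fun t => f (abr f t)

/-- `G^br(w)`. -/
def Gbr (f : ℝ → ℝ) : ℝ → ℝ := if 0 < ubr f 1 then scaleMap (ubr f 1) (Hbr f) else 0

/-- the past-maximum function `w̄`. -/
def pastMax (f : ℝ → ℝ) (t : ℝ) : ℝ := fileMaxOn f 0 t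

/-- `g^me_t(w)`. -/
def gme (f : ℝ → ℝ) (t : ℝ) : ℝ := sSup {s | s ∈ Set.Icc 0 t ∧ pastMax f s - f s = 0}

/-- `d^me_t(w)`, with the convention `d^me_1(w) = 1`. -/
def dme (f : ℝ → ℝ) (t : ℝ) : ℝ :=
  if t = 1 then 1 else sInf {s | s ∈ Set.Ioc t 1 ∧ pastMax f s - f s = 0}

/-- `r^me_t(w)`. -/
def rme (f : ℝ → ℝ) (t : ℝ) : ℝ :=
  sSup ((fun s => pastMax f s - f s) '' Set.Icc (gme f t) (dme f t))

/-- `u^me_t(w)`. -/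
def ume (f : ℝ → ℝ) (t : ℝ) : ℝ :=
  if t ≤ gammaHalf 1 f then ∫ s in (0:ℝ)..t, if rme f s < pastMax f s then (1:ℝ) else 0
  else (∫ s in (0:ℝ)..gammaHalf 1 f, if rme f s < pastMax f s then (1:ℝ) else 0) +
    ∫ s in gammaHalf 1 f..t, if rme f s < pastMax f s - f 1 / 2 then (1:ℝ) else 0

/-- `α^me_s(w)`, with the convention `α^me_{u^me_1(w)}(w) = 1`. -/
def ame (f : ℝ → ℝ) (s : ℝ) : ℝ :=
  if s = ume f 1 then 1 else sInf {t | t ∈ Set.Icc (0:ℝ) 1 ∧ s < ume f t}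

/-- `H^me(w)`. -/
def Hme (f : ℝ → ℝ) : ℝ → ℝ := fun t => f (ame f t)

/-- `G^me(w)`. -/
def Gme (f : ℝ → ℝ) : ℝ → ℝ := if 0 < ume f 1 then scaleMap (ume f 1) (Hme f) else 0

/-- Regularity property (i): uniqueness of one-sided maximizers at rational times. -/
def UniqueOneSidedMax (f : ℝ → ℝ) : Prop :=
  ∀ t : ℚ, (t : ℝ) ∈ Set.Icc (0:ℝ) 1 →
    (∃! s, s ∈ Set.Icc (0:ℝ) (t:ℝ) ∧ ∀ u ∈ Set.Icc (0:ℝ) (t:ℝ), f u ≤ f s) ∧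
    (∃! s, s ∈ Set.Icc ((t:ℝ)) 1 ∧ ∀ u ∈ Set.Icc ((t:ℝ)) 1, f u ≤ f s)

/-- Regularity property (ii): the level `0` is not a strict local minimum of `f` on `[0,1]`. -/
def NoStrictLocalMinAtZero (f : ℝ → ℝ) : Prop :=
  ¬ ∃ t ∈ Set.Icc (0:ℝ) 1, f t = 0 ∧
      ∃ δ > 0, ∀ s ∈ Set.Icc (0:ℝ) 1, s ≠ t → |s - t| < δ → f t < f s

/-- `w ∈ B^reg_1`. -/
def Regular (f : ℝ → ℝ) : Prop :=
  IsBridge 1 f ∧ UniqueOneSidedMax f ∧ NoStrictLocalMinAtZero f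

theorem tendsto_of_isMaxOn_of_tendstoUniformlyOn {α ι : Type*} [TopologicalSpace α]
    {p : Filter ι} {K : Set α} (hK : IsCompact K) {F : ι → α → ℝ} {f : α → ℝ}
    (hf : ContinuousOn f K) (hF : TendstoUniformlyOn F f p K) {x₀ : α} (hx₀K : x₀ ∈ K)
    (hx₀ : IsMaxOn f K x₀) (huniq : ∀ y ∈ K, IsMaxOn f K y → y = x₀) {x : ι → α}
    (hxK : ∀ i, x i ∈ K) (hx : ∀ i, IsMaxOn (F i) K (x i)) :
    Tendsto x p (𝓝 x₀) := by
  refine tendsto_nhds.2 fun U hU hx₀U => ?_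
  rcases (K \ U).eq_empty_or_nonempty with hempty | hne
  · exact Eventually.of_forall fun i => by_contra fun hxU => hempty.subset ⟨hxK i, hxU⟩
  obtain ⟨y, hy, hymax⟩ := (hK.diff hU).exists_isMaxOn hne (hf.mono sdiff_subset)
  have hgap : f y < f x₀ := (hx₀ hy.1).lt_of_ne fun h => hy.2 <|
    huniq y hy.1 (fun z hz => h ▸ hx₀ hz) ▸ hx₀U
  filter_upwards [Metric.tendstoUniformlyOn_iff.1 hF _ (half_pos (sub_pos.2 hgap))] with i hi
  by_contra hxU
  have hxi := hi _ (hxK i)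
  have hx₀i := hi _ hx₀K
  have hFi : F i x₀ ≤ F i (x i) := hx i hx₀K
  have hfy : f (x i) ≤ f y := hymax ⟨hxK i, hxU⟩
  rw [Real.dist_eq, abs_lt] at hxi hx₀i
  linarith

section Rho

variable {a : ℝ} {f : ℝ → ℝ}

theorem rho_mem_argmax (ha : 0 ≤ a) (hf : ContinuousOn f (Icc 0 a)) :
    rho a f ∈ {s | s ∈ Icc 0 a ∧ f s = fileMaxOn f 0 a} := by
  obtain ⟨x, hx, hfx, -⟩ := isCompact_Icc.exists_sSup_image_eq_and_ge (nonempty_Icc.2 ha) hf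
  have hclosed : IsClosed {s | s ∈ Icc 0 a ∧ f s = fileMaxOn f 0 a} :=
    hf.preimage_isClosed_of_isClosed isClosed_Icc isClosed_singleton
  exact hclosed.csInf_mem ⟨x, hx, hfx.symm⟩ ⟨0, fun s hs => hs.1.1⟩

theorem rho_mem_Icc (ha : 0 ≤ a) (hf : ContinuousOn f (Icc 0 a)) : rho a f ∈ Icc 0 a :=
  (rho_mem_argmax ha hf).1

theorem isMaxOn_rho (ha : 0 ≤ a) (hf : ContinuousOn f (Icc 0 a)) :
    IsMaxOn f (Icc 0 a) (rho a f) := isMaxOn_iff.2 fun u hu => by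
  rw [(rho_mem_argmax ha hf).2]
  exact le_csSup (isCompact_Icc.bddAbove_image hf) (mem_image_of_mem f hu)

end Rho

def reverseAfter (a : ℝ) (f : ℝ → ℝ) (r t : ℝ) : ℝ :=
  f (min t r) + f (a + r - max t r)

section ReverseAfter

variable {a : ℝ} {f : ℝ → ℝ}

theorem Tme_eq_reverseAfter (hfa : f a = 0) : Tme a f = reverseAfter a f (rho a f) := by
  ext t
  unfold Tme reverseAfter
  split_ifs with ht
  · simp [min_eq_left ht, max_eq_right ht, hfa]
  · push Not at ht
    simp [min_eq_right ht.le, max_eq_left ht.le]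

theorem reverseAfter_args_mem_Icc {r t : ℝ} (hr : r ∈ Icc 0 a) (ht : t ∈ Icc 0 a) :
    min t r ∈ Icc 0 a ∧ a + r - max t r ∈ Icc 0 a :=
  ⟨⟨le_min ht.1 hr.1, (min_le_right t r).trans hr.2⟩,
    ⟨by linarith [max_le ht.2 hr.2, hr.1], by linarith [le_max_right t r]⟩⟩

theorem continuousOn_reverseAfter (hf : ContinuousOn f (Icc 0 a)) :
    ContinuousOn (Function.uncurry (reverseAfter a f)) (Icc 0 a ×ˢ Icc 0 a) := by
  have hargs := fun (q : ℝ × ℝ) (hq : q ∈ Icc 0 a ×ˢ Icc 0 a) =>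
    reverseAfter_args_mem_Icc hq.1 hq.2
  exact (hf.comp (by fun_prop) fun q hq => (hargs q hq).1).add
    (hf.comp (by fun_prop) fun q hq => (hargs q hq).2)

theorem dist_reverseAfter_le {g : ℝ → ℝ} {ε r t : ℝ} (hr : r ∈ Icc 0 a) (ht : t ∈ Icc 0 a)
    (hfg : ∀ s ∈ Icc 0 a, dist (f s) (g s) < ε) :
    dist (reverseAfter a f r t) (reverseAfter a g r t) < ε + ε :=
  (dist_add_add_le _ _ _ _).trans_lt <| add_lt_add
    (hfg _ (reverseAfter_args_mem_Icc hr ht).1)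
    (hfg _ (reverseAfter_args_mem_Icc hr ht).2)

theorem tendstoUniformlyOn_reverseAfter {ι : Type*} {p : Filter ι} {w : ι → ℝ → ℝ}
    (hf : ContinuousOn f (Icc 0 a)) (hw : TendstoUniformlyOn w f p (Icc 0 a))
    {r : ι → ℝ} {r₀ : ℝ} (hr : Tendsto r p (𝓝[Icc 0 a] r₀)) (hr₀ : r₀ ∈ Icc 0 a) :
    TendstoUniformlyOn (fun i => reverseAfter a (w i) (r i)) (reverseAfter a f r₀) p
      (Icc 0 a) := by
  have hparam : TendstoUniformlyOn (fun i => reverseAfter a f (r i)) (reverseAfter a f r₀) p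
      (Icc 0 a) := fun u hu => hr.eventually <|
    ((isCompact_Icc.prod isCompact_Icc).uniformContinuousOn_of_continuous
      (continuousOn_reverseAfter hf)).tendstoUniformlyOn hr₀ u hu
  rw [Metric.tendstoUniformlyOn_iff] at hparam hw ⊢
  intro ε hε
  filter_upwards [hparam _ (half_pos hε), hw _ (half_pos (half_pos hε)),
    hr self_mem_nhdsWithin] with i hparam_i hw_i hr_i t ht
  calc dist (reverseAfter a f r₀ t) (reverseAfter a (w i) (r i) t)
      ≤ dist (reverseAfter a f r₀ t) (reverseAfter a f (r i) t) +
        dist (reverseAfter a f (r i) t) (reverseAfter a (w i) (r i) t) := dist_triangle _ _ _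
    _ < ε / 2 + (ε / 2 / 2 + ε / 2 / 2) :=
      add_lt_add (hparam_i t ht) (dist_reverseAfter_le hr_i ht hw_i)
    _ = ε := by ring

end ReverseAfter

/-- convergence of the argmax and continuity of `T^me_a` at points of `B*_a`. -/
theorem stmt0 (a : ℝ) (ha : 0 < a) (w : ℕ → ℝ → ℝ) (v : ℝ → ℝ)
    (hw : ∀ n, IsBridge a (w n)) (hv : IsBridgeStar a v)
    (hconv : TendstoUniformlyOn w v atTop (Set.Icc 0 a)) :
    Tendsto (fun n => rho a (w n)) atTop (nhds (rho a v)) ∧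
    TendstoUniformlyOn (fun n => Tme a (w n)) (Tme a v) atTop (Set.Icc 0 a) := by
  obtain ⟨⟨hv_cont, -, hva⟩, s, -, hs⟩ := hv
  have hρ_mem := rho_mem_Icc ha.le hv_cont
  have hρ_max := isMaxOn_rho ha.le hv_cont
  have huniq : ∀ y ∈ Icc 0 a, IsMaxOn v (Icc 0 a) y → y = rho a v := fun y hy hy_max =>
    (hs y ⟨hy, isMaxOn_iff.1 hy_max⟩).trans (hs _ ⟨hρ_mem, isMaxOn_iff.1 hρ_max⟩).symm
  have hρ : Tendsto (fun n => rho a (w n)) atTop (𝓝 (rho a v)) :=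
    tendsto_of_isMaxOn_of_tendstoUniformlyOn isCompact_Icc hv_cont hconv hρ_mem hρ_max huniq
      (fun n => rho_mem_Icc ha.le (hw n).1) (fun n => isMaxOn_rho ha.le (hw n).1)
  refine ⟨hρ, ?_⟩
  simp_rw [Tme_eq_reverseAfter (hw _).2.2, Tme_eq_reverseAfter hva]
  exact tendstoUniformlyOn_reverseAfter hv_cont hconv
    (tendsto_nhdsWithin_iff.2 ⟨hρ, Eventually.of_forall fun n => rho_mem_Icc ha.le (hw n).1⟩)
    hρ_mem
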